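/- arXiv:1810.01224 — 3 statements merged into one kernel-verified Lean document; each statement's English description precedes it below -/
import Mathlib

section
/- Let R be a commutative ring, let g ≥ 1, and let α, α₁, …, α_{2g−1} ∈ R. Define coefficients μ̃_{4g−2−2i} (0 ≤ i ≤ 2g−1) by ∏_{j=1}^{2g−1}(x−α_j) = ∑_{i=0}^{2g−1} μ̃_{4g−2−2i} x^{i}, with μ̃_m := 0 for all other indices m, and define coefficients μ_{4g+2−2i} (0 ≤ i ≤ 2g+1) by (x−α)² ∏_{j=1}^{2g−1}(x−α_j) = ∑_{i=0}^{2g+1} μ_{4g+2−2i} x^{i}. Set H_g(x₁,x₂) = ∑_{i=0}^{g} (x₁x₂)^{i} (2μ_{4g+2−4i} + μ_{4g−4i}(x₁+x₂)) and H_{g−1}(x₁,x₂) = ∑_{i=0}^{g−1} (x₁x₂)^{i} (2μ̃_{4g−2−4i} + μ̃_{4g−4−4i}(x₁+x₂)). Then in R[x₁,x₂]: H_g(x₁,x₂) = (x₁−α)(x₂−α) H_{g−1}(x₁,x₂) + α (x₁−x₂)² ∑_{i=0}^{g−1} μ̃_{4g−4−4i} x₁^{i} x₂^{i}. -/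
open MvPolynomial

/-!
Write `P(x) = Pₑ(x²) + x Pₒ(x²)`. The map `P ↦ 2 Pₑ(x₁x₂) + (x₁ + x₂) Pₒ(x₁x₂)` is `R`-linear and
sends `∏ (x - αⱼ)` to `H_{g-1}` and `(x - α)² ∏ (x - αⱼ)` to `H_g`, while `Pₒ(x₁x₂)` is the last
sum of the identity. So it suffices to check the identity on monomials `xⁿ`, where, with
`s = x₁x₂` and `t = x₁ + x₂`, it reduces to `s - α t + α² = (x₁ - α)(x₂ - α)` for even `n` and
to `s t - 4 α s + α² t = (x₁ - α)(x₂ - α) t + α (x₁ - x₂)²` for odd `n`.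
-/

theorem Polynomial.basisMonomials_constr_monomial {R M : Type*} [CommSemiring R]
    [AddCommMonoid M] [Module R M] (h : ℕ → M) (k : ℕ) (a : R) :
    (Polynomial.basisMonomials R).constr R h (Polynomial.monomial k a) = a • h k := by
  have hk : Polynomial.monomial k a = a • Polynomial.basisMonomials R k := by
    simp [Polynomial.coe_basisMonomials, Polynomial.smul_monomial]
  rw [hk, map_smul, Module.Basis.constr_basis]

namespace TwoPointForm

section

variable {R : Type*} [CommSemiring R]

noncomputable def symmMonomial (k : ℕ) : MvPolynomial (Fin 2) R :=
  (X 0 * X 1) ^ (k / 2) * if Even k then 2 else X 0 + X 1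

noncomputable def oddMonomial (k : ℕ) : MvPolynomial (Fin 2) R :=
  if Even k then 0 else (X 0 * X 1) ^ (k / 2)

lemma symmMonomial_two_mul (j : ℕ) : (symmMonomial (2 * j) : MvPolynomial (Fin 2) R) =
    (X 0 * X 1) ^ j * 2 := by
  simp [symmMonomial]

lemma symmMonomial_two_mul_add_one (j : ℕ) :
    (symmMonomial (2 * j + 1) : MvPolynomial (Fin 2) R) = (X 0 * X 1) ^ j * (X 0 + X 1) := by
  rw [symmMonomial, if_neg (Nat.not_even_two_mul_add_one j)]
  congr 2
  omega

lemma oddMonomial_two_mul (j : ℕ) : (oddMonomial (2 * j) : MvPolynomial (Fin 2) R) = 0 := by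
  simp [oddMonomial]

lemma oddMonomial_two_mul_add_one (j : ℕ) :
    (oddMonomial (2 * j + 1) : MvPolynomial (Fin 2) R) = (X 0 * X 1) ^ j := by
  rw [oddMonomial, if_neg (Nat.not_even_two_mul_add_one j)]
  congr 1
  omega

/-- `P(x) = Pₑ(x²) + x Pₒ(x²) ↦ 2 Pₑ(x₁x₂) + (x₁ + x₂) Pₒ(x₁x₂)` -/
noncomputable def symmForm (R : Type*) [CommSemiring R] :
    Polynomial R →ₗ[R] MvPolynomial (Fin 2) R :=
  (Polynomial.basisMonomials R).constr R symmMonomial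

/-- `P(x) = Pₑ(x²) + x Pₒ(x²) ↦ Pₒ(x₁x₂)` -/
noncomputable def oddForm (R : Type*) [CommSemiring R] :
    Polynomial R →ₗ[R] MvPolynomial (Fin 2) R :=
  (Polynomial.basisMonomials R).constr R oddMonomial

lemma symmForm_monomial (k : ℕ) (a : R) :
    symmForm R (Polynomial.monomial k a) = C a * symmMonomial k := by
  rw [symmForm, Polynomial.basisMonomials_constr_monomial, smul_eq_C_mul]

lemma oddForm_monomial (k : ℕ) (a : R) :
    oddForm R (Polynomial.monomial k a) = C a * oddMonomial k := by
  rw [oddForm, Polynomial.basisMonomials_constr_monomial, smul_eq_C_mul]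

theorem symmForm_sum_range (n : ℕ) (c : ℕ → R) :
    symmForm R (∑ k ∈ Finset.range (2 * n), Polynomial.C (c k) * Polynomial.X ^ k) =
      ∑ i ∈ Finset.range n,
        (X 0 * X 1) ^ i * (C (2 * c (2 * i)) + C (c (2 * i + 1)) * (X 0 + X 1)) := by
  induction n with
  | zero => simp
  | succ n ih =>
    rw [show 2 * (n + 1) = 2 * n + 1 + 1 by ring, Finset.sum_range_succ, Finset.sum_range_succ,
      Finset.sum_range_succ, map_add, map_add, ih, Polynomial.C_mul_X_pow_eq_monomial,
      Polynomial.C_mul_X_pow_eq_monomial, symmForm_monomial, symmForm_monomial,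
      symmMonomial_two_mul, symmMonomial_two_mul_add_one, map_mul, map_ofNat]
    ring

theorem oddForm_sum_range (n : ℕ) (c : ℕ → R) :
    oddForm R (∑ k ∈ Finset.range (2 * n), Polynomial.C (c k) * Polynomial.X ^ k) =
      ∑ i ∈ Finset.range n, C (c (2 * i + 1)) * X 0 ^ i * X 1 ^ i := by
  induction n with
  | zero => simp
  | succ n ih =>
    rw [show 2 * (n + 1) = 2 * n + 1 + 1 by ring, Finset.sum_range_succ, Finset.sum_range_succ,
      Finset.sum_range_succ, map_add, map_add, ih, Polynomial.C_mul_X_pow_eq_monomial,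
      Polynomial.C_mul_X_pow_eq_monomial, oddForm_monomial, oddForm_monomial,
      oddMonomial_two_mul, oddMonomial_two_mul_add_one]
    ring

end

theorem symmForm_X_sub_C_sq_mul {R : Type*} [CommRing R] (α : R) (P : Polynomial R) :
    symmForm R ((Polynomial.X - Polynomial.C α) ^ 2 * P) =
      (X 0 - C α) * (X 1 - C α) * symmForm R P + C α * (X 0 - X 1) ^ 2 * oddForm R P := by
  suffices symmForm R ∘ₗ LinearMap.mulLeft R ((Polynomial.X - Polynomial.C α) ^ 2) =
      LinearMap.mulLeft R ((X 0 - C α) * (X 1 - C α)) ∘ₗ symmForm R +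
        LinearMap.mulLeft R (C α * (X 0 - X 1) ^ 2) ∘ₗ oddForm R from
    LinearMap.congr_fun this P
  refine (Polynomial.basisMonomials R).ext fun n => ?_
  have hX : (Polynomial.X - Polynomial.C α) ^ 2 * Polynomial.monomial n 1 =
      Polynomial.monomial (n + 2) 1 - Polynomial.monomial (n + 1) (2 * α) +
        Polynomial.monomial n (α ^ 2) := by
    simp only [← Polynomial.C_mul_X_pow_eq_monomial, map_one, map_mul, map_pow, map_ofNat]
    ring
  simp only [LinearMap.comp_apply, LinearMap.add_apply, LinearMap.mulLeft_apply,
    Polynomial.coe_basisMonomials]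
  rw [hX, map_add, map_sub, symmForm_monomial, symmForm_monomial, symmForm_monomial,
    symmForm_monomial, oddForm_monomial]
  obtain ⟨j, rfl | rfl⟩ := Nat.even_or_odd' n
  · rw [show 2 * j + 2 = 2 * (j + 1) by ring, symmMonomial_two_mul, symmMonomial_two_mul,
      symmMonomial_two_mul_add_one, oddMonomial_two_mul]
    simp only [map_one, map_mul, map_pow, map_ofNat]
    ring
  · rw [show 2 * j + 1 + 2 = 2 * (j + 1) + 1 by ring, show 2 * j + 1 + 1 = 2 * (j + 1) by ring,
      symmMonomial_two_mul, symmMonomial_two_mul_add_one, symmMonomial_two_mul_add_one,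
      oddMonomial_two_mul_add_one]
    simp only [map_one, map_mul, map_pow, map_ofNat]
    ring

end TwoPointForm

theorem statement7_general (R : Type*) [CommRing R] (g : ℕ)
    (α : R) (αs : Fin (2 * g - 1) → R) (μt μ : ℤ → R)
    (hμt : (∏ j, (Polynomial.X - Polynomial.C (αs j))) =
      ∑ i ∈ Finset.range (2 * g),
        Polynomial.C (μt (4 * (g : ℤ) - 2 - 2 * (i : ℤ))) * Polynomial.X ^ i)
    (hμ : ((Polynomial.X - Polynomial.C α) ^ 2 * ∏ j, (Polynomial.X - Polynomial.C (αs j))) =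
      ∑ i ∈ Finset.range (2 * g + 2),
        Polynomial.C (μ (4 * (g : ℤ) + 2 - 2 * (i : ℤ))) * Polynomial.X ^ i) :
    (∑ i ∈ Finset.range (g + 1),
        ((X 0 : MvPolynomial (Fin 2) R) * X 1) ^ i *
          (C (2 * μ (4 * (g : ℤ) + 2 - 4 * (i : ℤ))) +
            C (μ (4 * (g : ℤ) - 4 * (i : ℤ))) * (X 0 + X 1))) =
      (X 0 - C α) * (X 1 - C α) *
        (∑ i ∈ Finset.range g,
          ((X 0 : MvPolynomial (Fin 2) R) * X 1) ^ i *
            (C (2 * μt (4 * (g : ℤ) - 2 - 4 * (i : ℤ))) +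
              C (μt (4 * (g : ℤ) - 4 - 4 * (i : ℤ))) * (X 0 + X 1))) +
      C α * (X 0 - X 1) ^ 2 *
        ∑ i ∈ Finset.range g,
          C (μt (4 * (g : ℤ) - 4 - 4 * (i : ℤ))) * X 0 ^ i * X 1 ^ i := by
  open TwoPointForm in
  have hHg := symmForm_sum_range (g + 1) fun k => μ (4 * g + 2 - 2 * k)
  have hHg₁ := symmForm_sum_range g fun k => μt (4 * g - 2 - 2 * k)
  have hE := oddForm_sum_range g fun k => μt (4 * g - 2 - 2 * k)
  rw [mul_add_one, ← hμ, symmForm_X_sub_C_sq_mul] at hHg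
  rw [← hμt] at hHg₁ hE
  rw [hHg₁, hE] at hHg
  push_cast at hHg
  -- only the integer indices of `μ` and `μt` still differ, e.g. `4 * g + 2 - 2 * (2 * i + 1)`
  convert hHg.symm using 0
  ring_nf

/-- For a commutative ring `R`, with `μ̃` the coefficients of `∏_{j=1}^{2g-1}(x-αⱼ)`
(indexed so that the coefficient of `xⁱ` is `μ̃_{4g-2-2i}`, and `μ̃_m = 0` otherwise)
and `μ` the coefficients of `(x-α)² ∏_{j=1}^{2g-1}(x-αⱼ)` (coefficient of `xⁱ` being
`μ_{4g+2-2i}`), the polynomials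
`H_g = ∑_{i=0}^{g} (x₁x₂)ⁱ (2μ_{4g+2-4i} + μ_{4g-4i}(x₁+x₂))` and
`H_{g-1} = ∑_{i=0}^{g-1} (x₁x₂)ⁱ (2μ̃_{4g-2-4i} + μ̃_{4g-4-4i}(x₁+x₂))` satisfy
`H_g = (x₁-α)(x₂-α) H_{g-1} + α (x₁-x₂)² ∑_{i=0}^{g-1} μ̃_{4g-4-4i} x₁ⁱ x₂ⁱ`. -/
theorem statement7 (R : Type*) [CommRing R] (g : ℕ) (hg : 1 ≤ g)
    (α : R) (αs : Fin (2 * g - 1) → R) (μt μ : ℤ → R)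
    (hμt : (∏ j, (Polynomial.X - Polynomial.C (αs j))) =
      ∑ i ∈ Finset.range (2 * g),
        Polynomial.C (μt (4 * (g : ℤ) - 2 - 2 * (i : ℤ))) * Polynomial.X ^ i)
    (hμt0 : ∀ m : ℤ, (¬ ∃ i : ℕ, i ≤ 2 * g - 1 ∧ m = 4 * (g : ℤ) - 2 - 2 * (i : ℤ)) →
      μt m = 0)
    (hμ : ((Polynomial.X - Polynomial.C α) ^ 2 * ∏ j, (Polynomial.X - Polynomial.C (αs j))) =
      ∑ i ∈ Finset.range (2 * g + 2),
        Polynomial.C (μ (4 * (g : ℤ) + 2 - 2 * (i : ℤ))) * Polynomial.X ^ i) :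
    (∑ i ∈ Finset.range (g + 1),
        ((X 0 : MvPolynomial (Fin 2) R) * X 1) ^ i *
          (C (2 * μ (4 * (g : ℤ) + 2 - 4 * (i : ℤ))) +
            C (μ (4 * (g : ℤ) - 4 * (i : ℤ))) * (X 0 + X 1))) =
      (X 0 - C α) * (X 1 - C α) *
        (∑ i ∈ Finset.range g,
          ((X 0 : MvPolynomial (Fin 2) R) * X 1) ^ i *
            (C (2 * μt (4 * (g : ℤ) - 2 - 4 * (i : ℤ))) +
              C (μt (4 * (g : ℤ) - 4 - 4 * (i : ℤ))) * (X 0 + X 1))) +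
      C α * (X 0 - X 1) ^ 2 *
        ∑ i ∈ Finset.range g,
          C (μt (4 * (g : ℤ) - 4 - 4 * (i : ℤ))) * X 0 ^ i * X 1 ^ i :=
  statement7_general R g α αs μt μ hμt hμ
end

section
/- Let g ≥ 1, let α₁, …, α_{2g+1} ∈ ℂ be mutually distinct, and let F ∈ ℂ[[z]] be a formal power series with constant term 1 satisfying F(z)² = ∏_{j=1}^{2g+1}(1−α_j z²). Let U ⊆ ℂ((z)) be the ℂ-linear span of the set { z^{g−2i} : i ≥ 0 } ∪ { z^{−g−1−2i} F(z) : i ≥ 0 }. Then U is a point of the Sato Grassmannian UGM. -/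
/-- `V₀ = zℂ[[z]] ⊆ ℂ((z))`: the subspace of Laurent series involving only
strictly positive powers of `z`. -/
noncomputable def V0 : Submodule ℂ (LaurentSeries ℂ) where
  carrier := { f | ∀ n : ℤ, n ≤ 0 → f.coeff n = 0 }
  add_mem' := by
    intro a b ha hb n hn
    simp [HahnSeries.coeff_add, ha n hn, hb n hn]
  zero_mem' := by
    intro n hn
    simp
  smul_mem' := by
    intro c a ha n hn
    simp [HahnSeries.coeff_smul, ha n hn]

/-- The kernel of the canonical projection `π : V → V/V₀` restricted to `U`,
i.e. `{u ∈ U | π u = 0} = U ⊓ V₀`. -/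
noncomputable def satoKer (U : Submodule ℂ (LaurentSeries ℂ)) :
    Submodule ℂ (LaurentSeries ℂ) := U ⊓ V0

/-- The cokernel `(V/V₀)/π(U)` of the canonical projection `π : V → V/V₀`
restricted to `U`. -/
abbrev SatoCoker (U : Submodule ℂ (LaurentSeries ℂ)) : Type :=
  (LaurentSeries ℂ ⧸ V0) ⧸ U.map V0.mkQ

/-- A subspace `U ⊆ V = ℂ((z))` is a point of the Sato Grassmannian UGM if the kernel
and the cokernel of `π : V → V/V₀` restricted to `U` are finite dimensional over `ℂ`
of equal dimensions. -/
def IsUGM (U : Submodule ℂ (LaurentSeries ℂ)) : Prop :=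
  FiniteDimensional ℂ (satoKer U) ∧ FiniteDimensional ℂ (SatoCoker U) ∧
    Module.finrank ℂ (satoKer U) = Module.finrank ℂ (SatoCoker U)

/-- The element `z` of the field `ℂ((z))` of formal Laurent series. -/
noncomputable def zL : LaurentSeries ℂ := HahnSeries.single 1 1
/-! Each generator has a well-defined order: `z^{g-2i}` has order `g - 2i` and `z^{-g-1-2j}F` has
order `-g-1-2j` because `F(0) = 1`, and these orders are pairwise distinct. For such a family the
order of a finite combination is the least order occurring in it, so it behaves like a monomial
basis: `U ∩ V₀` is spanned by the generators of positive order, and the monomials `z^n`, `n ≤ 0`,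
whose exponent is not the order of a generator span a complement of `π(U)` (cancel leading terms one
at a time). Both index sets have `⌈g/2⌉` elements: the positive orders `g, g-2, …` and the missing
exponents `1-g, 3-g, …` up to `0`. -/

open HahnSeries Submodule

lemma HahnSeries.orderTop_add_of_ne {Γ R : Type*} [LinearOrder Γ] [AddMonoid R]
    {x y : HahnSeries Γ R} (hxy : x.orderTop ≠ y.orderTop) :
    (x + y).orderTop = min x.orderTop y.orderTop := by
  rcases hxy.lt_or_gt with h | h
  · rw [orderTop_add_eq_left h, min_eq_left h.le]
  · rw [orderTop_add_eq_right h, min_eq_right h.le]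

lemma HahnSeries.orderTop_smul_of_ne_zero {Γ K : Type*} [LinearOrder Γ] [DivisionRing K]
    {c : K} (hc : c ≠ 0) (x : HahnSeries Γ K) : (c • x).orderTop = x.orderTop := by
  refine le_antisymm ?_ (orderTop_le_orderTop_smul c x)
  simpa [smul_smul, inv_mul_cancel₀ hc] using orderTop_le_orderTop_smul c⁻¹ (c • x)

lemma HahnSeries.orderTop_ofPowerSeries_eq_zero {R : Type*} [Semiring R]
    {F : PowerSeries R} (hF : PowerSeries.constantCoeff F ≠ 0) :
    (ofPowerSeries ℤ R F).orderTop = 0 := by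
  refine le_antisymm (orderTop_le_of_coeff_ne_zero ?_) (le_orderTop_iff_forall.2 fun n hn => ?_)
  · simpa [PowerSeries.coeff_coe] using hF
  · rw [PowerSeries.coeff_coe, if_pos (by exact_mod_cast hn)]

lemma mem_V0_iff_one_le_orderTop {f : LaurentSeries ℂ} : f ∈ V0 ↔ 1 ≤ f.orderTop := by
  rw [le_orderTop_iff_forall]
  refine forall_congr' fun n => ?_
  constructor
  · intro h hn
    exact h (by exact_mod_cast Int.lt_add_one_iff.mp (by exact_mod_cast hn))
  · intro h hn
    exact h (by exact_mod_cast Int.lt_add_one_iff.mpr hn)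

section DistinctOrders

variable {ι : Type*} {u : ι → LaurentSeries ℂ} {e : ι → ℤ}

lemma orderTop_sum_smul_eq_inf (he : Function.Injective e)
    (hu : ∀ i, (u i).orderTop = e i) (c : ι → ℂ) (s : Finset ι) (hc : ∀ i ∈ s, c i ≠ 0) :
    (∑ i ∈ s, c i • u i).orderTop = s.inf fun i => (e i : WithTop ℤ) := by
  induction s using Finset.cons_induction with
  | empty => simp
  | cons a s ha ih =>
    have hsum := ih fun i hi => hc i (Finset.mem_cons_of_mem hi)
    have hterm : (c a • u a).orderTop = e a := by
      rw [orderTop_smul_of_ne_zero (hc a (Finset.mem_cons_self a s)), hu]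
    have hne : (e a : WithTop ℤ) ≠ s.inf fun i => (e i : WithTop ℤ) := by
      rcases s.eq_empty_or_nonempty with rfl | hs
      · simp
      · obtain ⟨j, hj, hinf⟩ := s.exists_mem_eq_inf hs fun i => (e i : WithTop ℤ)
        rw [hinf, Ne, WithTop.coe_eq_coe]
        exact fun h => ha (he h ▸ hj)
    rw [Finset.sum_cons, Finset.inf_cons, ← hsum, ← hterm, orderTop_add_of_ne (hterm ▸ hsum ▸ hne)]

lemma orderTop_linearCombination_eq_inf (he : Function.Injective e)
    (hu : ∀ i, (u i).orderTop = e i) (l : ι →₀ ℂ) :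
    (Finsupp.linearCombination ℂ u l).orderTop = l.support.inf fun i => (e i : WithTop ℤ) :=
  orderTop_sum_smul_eq_inf he hu l l.support fun _ => Finsupp.mem_support_iff.1

lemma linearIndependent_of_orderTop (he : Function.Injective e)
    (hu : ∀ i, (u i).orderTop = e i) : LinearIndependent ℂ u := by
  refine linearIndependent_iff.2 fun l hl => ?_
  have htop := orderTop_linearCombination_eq_inf he hu l
  rw [hl, orderTop_zero, eq_comm, Finset.inf_eq_top_iff] at htop
  exact Finsupp.support_eq_empty.1 <| Finset.eq_empty_of_forall_notMem fun i hi =>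
    WithTop.coe_ne_top (htop i hi)

lemma span_inf_V0_eq_span_of_orderTop (he : Function.Injective e)
    (hu : ∀ i, (u i).orderTop = e i) :
    span ℂ (Set.range u) ⊓ V0 = span ℂ (u '' {i | 0 < e i}) := by
  apply le_antisymm
  · rintro x ⟨hx, hxV0⟩
    rw [← Finsupp.range_linearCombination] at hx
    obtain ⟨l, rfl⟩ := hx
    rw [SetLike.mem_coe, mem_V0_iff_one_le_orderTop, orderTop_linearCombination_eq_inf he hu,
      Finset.le_inf_iff] at hxV0
    refine (Finsupp.mem_span_image_iff_linearCombination ℂ).2 ⟨l, ?_, rfl⟩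
    exact (Finsupp.mem_supported ℂ l).2 fun i hi => by
      have := hxV0 i hi
      norm_cast at this
  · rw [span_le]
    rintro _ ⟨i, hi, rfl⟩
    refine ⟨subset_span ⟨i, rfl⟩, mem_V0_iff_one_le_orderTop.2 ?_⟩
    rw [hu]
    exact_mod_cast (hi : 0 < e i)

lemma span_sup_V0_eq_top_of_orderTop (hu : ∀ i, (u i).orderTop = e i)
    (hcover : ∀ n ≤ 0, ∃ i, e i = n) : span ℂ (Set.range u) ⊔ V0 = ⊤ := by
  set T := span ℂ (Set.range u) ⊔ V0
  have key : ∀ N : ℕ, ∀ f : LaurentSeries ℂ, (∀ n : ℤ, n ≤ -N → f.coeff n = 0) → f ∈ T := by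
    intro N
    induction N with
    | zero => exact fun f hf => mem_sup_right fun n hn => hf n (by simpa using hn)
    | succ N ih =>
      intro f hf
      obtain ⟨i, hi⟩ := hcover (-N) (by omega)
      have hui : (u i).coeff (-N) ≠ 0 := coeff_orderTop_ne (hi ▸ hu i)
      set c := f.coeff (-N) / (u i).coeff (-N)
      have hrest : ∀ n : ℤ, n ≤ -N → (f - c • u i).coeff n = 0 := by
        intro n hn
        rcases hn.lt_or_eq with hn | rfl
        · have hui' : (u i).coeff n = 0 :=
            coeff_eq_zero_of_lt_orderTop (by rw [hu, hi]; exact_mod_cast hn)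
          rw [coeff_sub, coeff_smul, hf n (by push_cast; omega), hui', smul_zero, sub_zero]
        · rw [coeff_sub, coeff_smul, smul_eq_mul, div_mul_cancel₀ _ hui, sub_self]
      rw [← sub_add_cancel f (c • u i)]
      exact T.add_mem (ih _ hrest) (mem_sup_left (smul_mem _ c (subset_span ⟨i, rfl⟩)))
  rw [eq_top_iff]
  intro f _
  cases hf : f.orderTop with
  | top => exact orderTop_eq_top.1 hf ▸ T.zero_mem
  | coe m =>
    refine key (1 - m).toNat f fun n hn => coeff_eq_zero_of_lt_orderTop ?_
    rw [hf]
    exact_mod_cast (by omega : n < m)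

lemma finrank_satoKer_of_orderTop (he : Function.Injective e) (hu : ∀ i, (u i).orderTop = e i)
    (P : Finset ι) (hP : ∀ i, i ∈ P ↔ 0 < e i) :
    FiniteDimensional ℂ (satoKer (span ℂ (Set.range u))) ∧
      Module.finrank ℂ (satoKer (span ℂ (Set.range u))) = P.card := by
  have hker : satoKer (span ℂ (Set.range u)) = span ℂ (Set.range (u ∘ ((↑) : P → ι))) := by
    rw [satoKer, span_inf_V0_eq_span_of_orderTop he hu, Set.range_comp, Subtype.range_coe_subtype]
    congr 2
    ext i
    exact (hP i).symm
  rw [hker]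
  refine ⟨FiniteDimensional.span_of_finite ℂ (Set.finite_range _), ?_⟩
  rw [finrank_span_eq_card ((linearIndependent_of_orderTop he hu).comp _ Subtype.val_injective),
    Fintype.card_coe]

lemma finrank_satoCoker_of_orderTop (he : Function.Injective e)
    (hu : ∀ i, (u i).orderTop = e i) (G : Finset ℤ) (hG : ∀ n, n ∈ G ↔ n ≤ 0 ∧ n ∉ Set.range e) :
    FiniteDimensional ℂ (SatoCoker (span ℂ (Set.range u))) ∧
      Module.finrank ℂ (SatoCoker (span ℂ (Set.range u))) = G.card := by
  set U := span ℂ (Set.range u)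
  -- The monomials `z^n`, `n ∈ G`, together with `u` have distinct orders covering every `n ≤ 0`,
  -- so their span `W` maps onto a complement of `π(U)` in `V/V₀`.
  set w : G → LaurentSeries ℂ := fun n => single (n : ℤ) 1
  set W := span ℂ (Set.range w)
  have hw : ∀ n : G, (w n).orderTop = (n : ℤ) := fun n => orderTop_single one_ne_zero
  have hwe : Function.Injective (Sum.elim e ((↑) : G → ℤ)) :=
    he.sumElim Subtype.val_injective fun i n h => ((hG n).1 n.2).2 ⟨i, h⟩
  have huw : ∀ k, (Sum.elim u w k).orderTop = Sum.elim e (↑) k := by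
    rintro (i | n)
    exacts [hu i, hw n]
  have hcover : ∀ n ≤ 0, ∃ k, Sum.elim e ((↑) : G → ℤ) k = n := by
    intro n hn
    by_cases he' : n ∈ Set.range e
    · obtain ⟨i, rfl⟩ := he'
      exact ⟨.inl i, rfl⟩
    · exact ⟨.inr ⟨n, (hG n).2 ⟨hn, he'⟩⟩, rfl⟩
  have hspan : span ℂ (Set.range (Sum.elim u w)) = U ⊔ W := by
    rw [Set.Sum.elim_range, span_union]
  have hUW : Disjoint U W :=
    (linearIndependent_sum.1 (linearIndependent_of_orderTop hwe huw)).2.2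
  have hWV0 : Disjoint W V0 := by
    rw [disjoint_iff, span_inf_V0_eq_span_of_orderTop Subtype.val_injective hw, span_eq_bot]
    rintro _ ⟨n, hn, rfl⟩
    exact absurd hn (not_lt.2 ((hG n).1 n.2).1)
  have hcompl : IsCompl (U.map V0.mkQ) (W.map V0.mkQ) := by
    refine ⟨disjoint_def.2 ?_, codisjoint_iff.2 ?_⟩
    · rintro _ ⟨a, ha, rfl⟩ ⟨b, hb, hba⟩
      have hab : a - b ∈ U := by
        have hmem : a - b ∈ span ℂ (Set.range (Sum.elim u w)) ⊓ V0 :=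
          ⟨hspan ▸ sub_mem (mem_sup_left ha) (mem_sup_right hb),
            (Submodule.Quotient.eq V0).1 (by simpa only [mkQ_apply] using hba.symm)⟩
        rw [span_inf_V0_eq_span_of_orderTop hwe huw] at hmem
        refine span_le.2 ?_ hmem
        rintro _ ⟨i | n, hpos, rfl⟩
        · exact subset_span ⟨i, rfl⟩
        · exact absurd hpos (not_lt.2 ((hG n).1 n.2).1)
      have hb0 : b = 0 := disjoint_def.1 hUW b (by simpa using sub_mem ha hab) hb
      rw [← hba, hb0, map_zero]
    · rw [← Submodule.map_sup, map_mkQ_eq_top, ← hspan, sup_comm]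
      exact span_sup_V0_eq_top_of_orderTop huw hcover
  have hmapW : W.map V0.mkQ = span ℂ (Set.range (V0.mkQ ∘ w)) := by
    rw [map_span, Set.range_comp]
  have hind : LinearIndependent ℂ (V0.mkQ ∘ w) :=
    (linearIndependent_of_orderTop Subtype.val_injective hw).map (by rwa [ker_mkQ])
  have hfin : FiniteDimensional ℂ (W.map V0.mkQ) := by
    rw [hmapW]
    exact FiniteDimensional.span_of_finite ℂ (Set.finite_range _)
  let φ := quotientEquivOfIsCompl _ _ hcompl
  refine ⟨Module.Finite.equiv φ.symm, ?_⟩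
  rw [φ.finrank_eq, hmapW, finrank_span_eq_card hind, Fintype.card_coe]

theorem isUGM_span_of_orderTop (he : Function.Injective e) (hu : ∀ i, (u i).orderTop = e i)
    (P : Finset ι) (hP : ∀ i, i ∈ P ↔ 0 < e i)
    (G : Finset ℤ) (hG : ∀ n, n ∈ G ↔ n ≤ 0 ∧ n ∉ Set.range e) (hcard : P.card = G.card) :
    IsUGM (span ℂ (Set.range u)) := by
  obtain ⟨hker, hker_rank⟩ := finrank_satoKer_of_orderTop he hu P hP
  obtain ⟨hcoker, hcoker_rank⟩ := finrank_satoCoker_of_orderTop he hu G hG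
  exact ⟨hker, hcoker, by rw [hker_rank, hcoker_rank, hcard]⟩

end DistinctOrders

lemma zL_zpow (n : ℤ) : zL ^ n = (single n 1 : LaurentSeries ℂ) :=
  (RatFunc.single_zpow n).symm

lemma orderTop_zL_zpow (n : ℤ) : (zL ^ n).orderTop = n := by
  rw [zL_zpow, orderTop_single one_ne_zero]

def generatorOrder (g : ℕ) : ℕ ⊕ ℕ → ℤ :=
  Sum.elim (fun i => (g : ℤ) - 2 * i) (fun j => -(g : ℤ) - 1 - 2 * j)

lemma generatorOrder_injective (g : ℕ) : Function.Injective (generatorOrder g) :=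
  Function.Injective.sumElim (fun a b h => by omega) (fun a b h => by omega)
    (fun a b => by omega)

lemma mem_map_inl_iff_generatorOrder_pos (g : ℕ) (i : ℕ ⊕ ℕ) :
    i ∈ (Finset.range ((g + 1) / 2)).map .inl ↔ 0 < generatorOrder g i := by
  rcases i with i | j <;> simp [generatorOrder] <;> omega

lemma mem_gaps_iff_generatorOrder (g : ℕ) (n : ℤ) :
    n ∈ (Finset.range ((g + 1) / 2)).image (fun t : ℕ => -(g : ℤ) + 1 + 2 * (t : ℤ)) ↔
      n ≤ 0 ∧ n ∉ Set.range (generatorOrder g) := by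
  simp only [Finset.mem_image, Finset.mem_range, Set.mem_range, Sum.exists, generatorOrder,
    Sum.elim_inl, Sum.elim_inr, not_or, not_exists]
  constructor
  · rintro ⟨t, ht, rfl⟩
    exact ⟨by omega, fun i => by omega, fun j => by omega⟩
  · rintro ⟨hn, hA, hB⟩
    have := hA ((g - n) / 2).toNat
    have := hB ((-g - 1 - n) / 2).toNat
    exact ⟨((n + g - 1) / 2).toNat, by omega, by omega⟩

theorem statement12_general (g : ℕ)
    (F : PowerSeries ℂ) (hF0 : PowerSeries.constantCoeff F = 1) :
    IsUGM (Submodule.span ℂ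
      ({ f : LaurentSeries ℂ | ∃ i : ℕ, f = zL ^ ((g : ℤ) - 2 * (i : ℤ)) } ∪
       { f : LaurentSeries ℂ | ∃ i : ℕ,
          f = zL ^ (-(g : ℤ) - 1 - 2 * (i : ℤ)) * HahnSeries.ofPowerSeries ℤ ℂ F })) := by
  set u : ℕ ⊕ ℕ → LaurentSeries ℂ := Sum.elim (fun i => zL ^ generatorOrder g (.inl i))
    (fun j => zL ^ generatorOrder g (.inr j) * ofPowerSeries ℤ ℂ F)
  have hspan : ({ f : LaurentSeries ℂ | ∃ i : ℕ, f = zL ^ ((g : ℤ) - 2 * (i : ℤ)) } ∪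
      { f : LaurentSeries ℂ | ∃ i : ℕ,
        f = zL ^ (-(g : ℤ) - 1 - 2 * (i : ℤ)) * HahnSeries.ofPowerSeries ℤ ℂ F }) =
      Set.range u := by
    rw [Set.Sum.elim_range]
    congr 1 <;> ext <;> simp [generatorOrder, eq_comm]
  have hF : (ofPowerSeries ℤ ℂ F).orderTop = 0 :=
    orderTop_ofPowerSeries_eq_zero (by rw [hF0]; exact one_ne_zero)
  have hu : ∀ i, (u i).orderTop = generatorOrder g i := by
    rintro (i | j)
    · exact orderTop_zL_zpow _
    · simp [u, orderTop_zL_zpow, hF]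
  rw [hspan]
  refine isUGM_span_of_orderTop (generatorOrder_injective g) hu _
    (mem_map_inl_iff_generatorOrder_pos g) _ (mem_gaps_iff_generatorOrder g) ?_
  rw [Finset.card_map, Finset.card_image_of_injective _ fun a b h => by omega]

/-- For mutually distinct `α₁,…,α_{2g+1}` and `F ∈ ℂ[[z]]` with constant term `1`
satisfying `F² = ∏_{j=1}^{2g+1}(1-αⱼz²)`, the span of
`{ z^{g-2i} : i ≥ 0 } ∪ { z^{-g-1-2i} F(z) : i ≥ 0 }` is a point of the Sato
Grassmannian UGM. -/
theorem statement12 (g : ℕ) (hg : 1 ≤ g) (α : Fin (2 * g + 1) → ℂ)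
    (hα : Function.Injective α)
    (F : PowerSeries ℂ) (hF0 : PowerSeries.constantCoeff F = 1)
    (hF : F ^ 2 = ∏ j, (1 - PowerSeries.C (α j) * PowerSeries.X ^ 2)) :
    IsUGM (Submodule.span ℂ
      ({ f : LaurentSeries ℂ | ∃ i : ℕ, f = zL ^ ((g : ℤ) - 2 * (i : ℤ)) } ∪
       { f : LaurentSeries ℂ | ∃ i : ℕ,
          f = zL ^ (-(g : ℤ) - 1 - 2 * (i : ℤ)) * HahnSeries.ofPowerSeries ℤ ℂ F })) :=
  statement12_general g F hF0
end

section
/- Let g ≥ 2, let α, α₁, …, α_{2g−1} ∈ ℂ be mutually distinct, let F₀ ∈ ℂ[[z]] be a formal power series with constant term 1 satisfying F₀(z)² = ∏_{j=1}^{2g−1}(1−α_j z²), and let y₀ ∈ ℂ satisfy y₀² = ∏_{j=1}^{2g−1}(α−α_j) (so y₀ ≠ 0). Let U ⊆ ℂ((z)) be the ℂ-linear span of the set { z^{g−2−2i} : i ≥ 0 } ∪ { z^{−g−1−2i} F₀(z) : i ≥ 0 } ∪ { z^{−g+1} (F₀(z) + y₀ z^{2g−1}) (1−αz²)^{−1}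 }. Then U is a point of the Sato Grassmannian UGM. -/
open HahnSeries Submodule

def IsMonicOfOrder {R : Type*} [Semiring R] (n : ℤ) (f : LaurentSeries R) : Prop :=
  f.order = n ∧ f.leadingCoeff = 1

section IsMonicOfOrder

variable {R : Type*} [Semiring R] {n m : ℤ} {f h : LaurentSeries R}

theorem IsMonicOfOrder.coeff_self (hf : IsMonicOfOrder n f) : f.coeff n = 1 := by
  rw [← hf.1, ← leadingCoeff_eq, hf.2]

theorem IsMonicOfOrder.coeff_of_lt (hf : IsMonicOfOrder n f) {t : ℤ} (ht : t < n) :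
    f.coeff t = 0 :=
  coeff_eq_zero_of_lt_order (hf.1 ▸ ht)

variable [Nontrivial R]

theorem isMonicOfOrder_iff : IsMonicOfOrder n f ↔ f.coeff n = 1 ∧ ∀ t < n, f.coeff t = 0 := by
  refine ⟨fun hf => ⟨hf.coeff_self, fun t => hf.coeff_of_lt⟩, fun ⟨h1, h0⟩ => ?_⟩
  have hne : f ≠ 0 := ne_zero_of_coeff_ne_zero (h1 ▸ one_ne_zero)
  have hord : f.order = n :=
    le_antisymm (order_le_of_coeff_ne_zero (h1 ▸ one_ne_zero)) ((le_order_iff_forall hne).mpr h0)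
  exact ⟨hord, by rw [leadingCoeff_eq, hord, h1]⟩

theorem isMonicOfOrder_single (n : ℤ) : IsMonicOfOrder n (single n (1 : R)) :=
  ⟨order_single one_ne_zero, leadingCoeff_of_single⟩

theorem isMonicOfOrder_ofPowerSeries {p : PowerSeries R} (hp : PowerSeries.constantCoeff p = 1) :
    IsMonicOfOrder 0 (ofPowerSeries ℤ R p) := by
  refine isMonicOfOrder_iff.mpr ⟨?_, fun t ht => ?_⟩
  · simpa [PowerSeries.coeff_coe] using hp
  · simp [PowerSeries.coeff_coe, ht]

theorem IsMonicOfOrder.add (hf : IsMonicOfOrder n f) (hh : ∀ t ≤ n, h.coeff t = 0) :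
    IsMonicOfOrder n (f + h) :=
  isMonicOfOrder_iff.mpr ⟨by simp [hf.coeff_self, hh n le_rfl],
    fun t ht => by simp [hf.coeff_of_lt ht, hh t ht.le]⟩

theorem IsMonicOfOrder.mul (hf : IsMonicOfOrder n f) (hh : IsMonicOfOrder m h) :
    IsMonicOfOrder (n + m) (f * h) := by
  have hlc : f.leadingCoeff * h.leadingCoeff ≠ 0 := by simp [hf.2, hh.2]
  exact ⟨by rw [order_mul_of_ne_zero hlc, hf.1, hh.1],
    by rw [leadingCoeff_mul_of_ne_zero hlc, hf.2, hh.2, one_mul]⟩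

end IsMonicOfOrder

theorem IsMonicOfOrder.inv {K : Type*} [Field K] {n : ℤ} {f : LaurentSeries K}
    (hf : IsMonicOfOrder n f) : IsMonicOfOrder (-n) f⁻¹ := by
  have hne : f ≠ 0 := leadingCoeff_ne_zero.mp (by simp [hf.2])
  have hlc : f.leadingCoeff * f⁻¹.leadingCoeff ≠ 0 := by
    rw [← leadingCoeff_mul]; simp [hne]
  have hmul := congrArg (fun x => (x.order, x.leadingCoeff)) (mul_inv_cancel₀ hne)
  simp only [order_mul_of_ne_zero hlc, leadingCoeff_mul, order_one, leadingCoeff_one, hf.1, hf.2,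
    one_mul, Prod.mk.injEq] at hmul
  exact ⟨by omega, hmul.2⟩

theorem isMonicOfOrder_zL_zpow (n : ℤ) : IsMonicOfOrder n (zL ^ n) := by
  rw [zL, ← RatFunc.single_zpow]
  exact isMonicOfOrder_single n

theorem coeff_smul_zL_zpow (c : ℂ) (n t : ℤ) :
    (c • zL ^ n).coeff t = if t = n then c else 0 := by
  simp [zL, ← RatFunc.single_zpow, coeff_single]

section Echelon

variable {R : Type*} {S : Set ℤ}

theorem apply_eq_zero_of_coeff_linearCombination_eq_zero [Semiring R]
    {u : ℤ → LaurentSeries R} (hu : ∀ s ∈ S, IsMonicOfOrder s (u s)) {l : ℤ →₀ R}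
    (hl : ↑l.support ⊆ S) {N : ℤ}
    (h : ∀ t < N, (Finsupp.linearCombination R u l).coeff t = 0) {s : ℤ} (hs : s < N) :
    l s = 0 := by
  classical
  by_contra hls
  -- the coefficient of the combination at the least `m < N` in the support of `l` is `l m`
  set T := l.support.filter (· < N)
  have hT : T.Nonempty := ⟨s, Finset.mem_filter.mpr ⟨Finsupp.mem_support_iff.mpr hls, hs⟩⟩
  obtain ⟨hm, hmN⟩ := Finset.mem_filter.mp (T.min'_mem hT)
  set m := T.min' hT
  have hcoeff : (Finsupp.linearCombination R u l).coeff m = l m := by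
    rw [Finsupp.linearCombination_apply, Finsupp.sum, coeff_sum,
      Finset.sum_eq_single_of_mem m hm, coeff_smul, (hu m (hl hm)).coeff_self, smul_eq_mul, mul_one]
    intro t ht htm
    have hmt : m < t := by
      by_cases htN : t < N
      · exact lt_of_le_of_ne (T.min'_le t (Finset.mem_filter.mpr ⟨ht, htN⟩)) (Ne.symm htm)
      · omega
    rw [coeff_smul, (hu t (hl ht)).coeff_of_lt hmt, smul_zero]
  exact Finsupp.mem_support_iff.mp hm (hcoeff ▸ h m hmN)

theorem linearIndepOn_of_isMonicOfOrder [Ring R] {u : ℤ → LaurentSeries R}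
    (hu : ∀ s ∈ S, IsMonicOfOrder s (u s)) : LinearIndepOn R u S := by
  refine linearIndepOn_iff.mpr fun l hl hl0 => Finsupp.ext fun s => ?_
  exact apply_eq_zero_of_coeff_linearCombination_eq_zero hu hl (N := s + 1)
    (fun t _ => by rw [hl0, coeff_zero]) (lt_add_one s)

end Echelon

section V0

variable {S M : Set ℤ} {u : ℤ → LaurentSeries ℂ}

theorem apply_eq_zero_of_linearCombination_mem_V0 (hu : ∀ s ∈ S, IsMonicOfOrder s (u s))
    {l : ℤ →₀ ℂ} (hl : ↑l.support ⊆ S) (h : Finsupp.linearCombination ℂ u l ∈ V0)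
    {s : ℤ} (hs : s ≤ 0) : l s = 0 :=
  apply_eq_zero_of_coeff_linearCombination_eq_zero hu hl (N := 1)
    (fun t ht => h t (Int.lt_add_one_iff.mp ht)) (Int.lt_add_one_iff.mpr hs)

theorem span_image_inf_V0 (hu : ∀ s ∈ S, IsMonicOfOrder s (u s)) :
    span ℂ (u '' S) ⊓ V0 = span ℂ (u '' {s ∈ S | 0 < s}) := by
  refine le_antisymm ?_ (span_le.mpr ?_)
  · rintro x ⟨hxU, hx0⟩
    obtain ⟨l, hl, rfl⟩ := Finsupp.mem_span_image_iff_linearCombination ℂ |>.mp hxU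
    refine Finsupp.mem_span_image_iff_linearCombination ℂ |>.mpr
      ⟨l, fun t ht => ⟨hl ht, ?_⟩, rfl⟩
    by_contra hnpos
    exact Finsupp.mem_support_iff.mp ht
      (apply_eq_zero_of_linearCombination_mem_V0 hu hl hx0 (not_lt.mp hnpos))
  · rintro _ ⟨s, ⟨hs, hpos⟩, rfl⟩
    exact ⟨subset_span ⟨s, hs, rfl⟩, fun t ht => (hu s hs).coeff_of_lt (by omega)⟩

theorem V0_sup_span_image_eq_top (hu : ∀ s ∈ S, IsMonicOfOrder s (u s)) (hS : Set.Iic 0 ⊆ S) :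
    V0 ⊔ span ℂ (u '' S) = ⊤ := by
  set W := V0 ⊔ span ℂ (u '' S)
  have key : ∀ N ≤ 1, ∀ f : LaurentSeries ℂ, (∀ t < N, f.coeff t = 0) → f ∈ W := by
    intro N hN
    induction N, hN using Int.leInductionDown with
    | base => exact fun f hf => mem_sup_left fun t ht => hf t (by omega)
    | pred n hn ih =>
      intro f hf
      have hmem : n - 1 ∈ S := hS (Set.mem_Iic.mpr (by omega))
      have hu' := hu (n - 1) hmem
      have hrest : f - f.coeff (n - 1) • u (n - 1) ∈ W := by
        refine ih _ fun t ht => ?_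
        rcases lt_or_eq_of_le (Int.le_sub_one_of_lt ht) with ht' | rfl
        · simp [hf t ht', hu'.coeff_of_lt ht']
        · simp [hu'.coeff_self]
      have hlead : u (n - 1) ∈ W := mem_sup_right (subset_span ⟨n - 1, hmem, rfl⟩)
      simpa using add_mem hrest (smul_mem _ (f.coeff (n - 1)) hlead)
  exact eq_top_iff.mpr fun f _ => key (min f.order 1) (min_le_right _ _) f
    fun t ht => coeff_eq_zero_of_lt_order (lt_of_lt_of_le ht (min_le_left _ _))

theorem disjoint_V0_sup_span_image (hu : ∀ s ∈ S ∪ M, IsMonicOfOrder s (u s))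
    (hSM : Disjoint S M) (hM : M ⊆ Set.Iic 0) :
    Disjoint (V0 ⊔ span ℂ (u '' S)) (span ℂ (u '' M)) := by
  refine disjoint_def.mpr fun x hx hxM => ?_
  obtain ⟨a, ha, y, hy, rfl⟩ := mem_sup.mp hx
  obtain ⟨l, hl, rfl⟩ := Finsupp.mem_span_image_iff_linearCombination ℂ |>.mp hy
  obtain ⟨c, hc, hcx⟩ := Finsupp.mem_span_image_iff_linearCombination ℂ |>.mp hxM
  have hdiff : Finsupp.linearCombination ℂ u (c - l) ∈ V0 := by
    rwa [map_sub, hcx, add_sub_cancel_right]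
  have hsupp : ↑(c - l).support ⊆ S ∪ M := fun t ht => by
    rcases Finset.mem_union.mp (Finsupp.support_sub ht) with h | h
    exacts [Or.inr (hc h), Or.inl (hl h)]
  have hc0 : c = 0 := Finsupp.ext fun m => by
    by_cases hm : m ∈ M
    · have hlm : l m = 0 := Finsupp.notMem_support_iff.mp fun h => hSM.ne_of_mem (hl h) hm rfl
      simpa [hlm] using apply_eq_zero_of_linearCombination_mem_V0 hu hsupp hdiff (hM hm)
    · exact Finsupp.notMem_support_iff.mp fun h => hm (hc h)
  rw [← hcx, hc0, map_zero]

theorem finrank_span_image (hu : ∀ s ∈ S, IsMonicOfOrder s (u s)) {F : Finset ℤ}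
    (hF : ↑F ⊆ S) : Module.finrank ℂ (span ℂ (u '' F)) = F.card := by
  rw [Set.image_eq_range, finrank_span_eq_card ((linearIndepOn_of_isMonicOfOrder hu).mono hF)]
  simp

end V0

theorem isUGM_span_image {S : Set ℤ} {u : ℤ → LaurentSeries ℂ}
    (hu : ∀ s ∈ S, IsMonicOfOrder s (u s)) {K M : Finset ℤ} (hK : ↑K = {s ∈ S | 0 < s})
    (hM : ↑M = Set.Iic 0 \ S) (hcard : K.card = M.card) : IsUGM (span ℂ (u '' S)) := by
  classical
  -- Complete `u` by the monomials `z ^ t` outside `S`; the cokernel is then spanned by `z ^ M`.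
  set v := S.piecewise u (fun t => single t 1)
  have hv (t : ℤ) : IsMonicOfOrder t (v t) := by
    by_cases ht : t ∈ S
    · simpa [v, ht] using hu t ht
    · simpa [v, ht] using isMonicOfOrder_single t
  rw [← (S.piecewise_eqOn u _).image_eq]
  have hker : satoKer (span ℂ (v '' S)) = span ℂ (v '' K) := by
    rw [satoKer, span_image_inf_V0 fun s _ => hv s, hK]
  have hcompl : IsCompl (V0 ⊔ span ℂ (v '' S)) (span ℂ (v '' M)) := by
    refine ⟨disjoint_V0_sup_span_image (fun s _ => hv s) ?_ ?_, codisjoint_iff.mpr ?_⟩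
    · exact Set.disjoint_right.mpr fun m hm => ((Set.ext_iff.mp hM m).mp hm).2
    · exact fun m hm => ((Set.ext_iff.mp hM m).mp hm).1
    · rw [sup_assoc, ← span_union, ← Set.image_union]
      refine V0_sup_span_image_eq_top (fun s _ => hv s) fun t ht => ?_
      by_cases htS : t ∈ S
      exacts [Or.inl htS, Or.inr (hM ▸ ⟨ht, htS⟩)]
  let e : SatoCoker (span ℂ (v '' S)) ≃ₗ[ℂ] span ℂ (v '' M) :=
    (quotientQuotientEquivQuotientSup _ _).trans (quotientEquivOfIsCompl _ _ hcompl)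
  refine ⟨?_, ?_, ?_⟩
  · rw [hker]; exact FiniteDimensional.span_of_finite ℂ (K.finite_toSet.image v)
  · have : FiniteDimensional ℂ (span ℂ (v '' M)) :=
      FiniteDimensional.span_of_finite ℂ (M.finite_toSet.image v)
    exact Module.Finite.equiv e.symm
  · rw [e.finrank_eq, hker, finrank_span_image (fun s _ => hv s) (Set.subset_univ _),
      finrank_span_image (fun s _ => hv s) (Set.subset_univ _), hcard]

theorem isUGM_span_of_leadingCoeff_eq_one {G : Set (LaurentSeries ℂ)}
    (hG : ∀ f ∈ G, f.leadingCoeff = 1) (hinj : G.InjOn order) {K M : Finset ℤ}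
    (hK : ↑K = {n ∈ order '' G | 0 < n}) (hM : ↑M = Set.Iic 0 \ order '' G)
    (hcard : K.card = M.card) : IsUGM (span ℂ G) := by
  have hu : ∀ s ∈ order '' G, IsMonicOfOrder s (Function.invFunOn order G s) := fun s hs =>
    ⟨(Function.invFunOn_pos hs).2, hG _ (Function.invFunOn_pos hs).1⟩
  simpa [hinj.invFunOn_image subset_rfl] using isUGM_span_image hu hK hM hcard

theorem exists_nat_eq_sub_two_mul_iff {a n : ℤ} :
    (∃ i : ℕ, n = a - 2 * i) ↔ n ≤ a ∧ 2 ∣ a - n :=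
  ⟨fun ⟨i, hi⟩ => ⟨by omega, ⟨i, by omega⟩⟩,
    fun ⟨hle, k, hk⟩ => ⟨k.toNat, by omega⟩⟩

theorem isUGM_span_generators_of_isMonicOfOrder (g : ℕ) (hg : 1 ≤ g) {F w : LaurentSeries ℂ}
    (hF : IsMonicOfOrder 0 F) (hw : IsMonicOfOrder (-(g : ℤ) + 1) w) :
    IsUGM (span ℂ ({ f | ∃ i : ℕ, f = zL ^ ((g : ℤ) - 2 - 2 * (i : ℤ)) } ∪
      { f | ∃ i : ℕ, f = zL ^ (-(g : ℤ) - 1 - 2 * (i : ℤ)) * F } ∪ {w})) := by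
  set G := { f | ∃ i : ℕ, f = zL ^ ((g : ℤ) - 2 - 2 * (i : ℤ)) } ∪
      { f | ∃ i : ℕ, f = zL ^ (-(g : ℤ) - 1 - 2 * (i : ℤ)) * F } ∪ {w}
  have hA (i : ℕ) : IsMonicOfOrder ((g : ℤ) - 2 - 2 * i) (zL ^ ((g : ℤ) - 2 - 2 * i)) :=
    isMonicOfOrder_zL_zpow _
  have hB (i : ℕ) :
      IsMonicOfOrder (-(g : ℤ) - 1 - 2 * i) (zL ^ (-(g : ℤ) - 1 - 2 * i) * F) := by
    simpa using (isMonicOfOrder_zL_zpow _).mul hF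
  have himage : order '' G = {n : ℤ | (∃ i : ℕ, n = g - 2 - 2 * i) ∨
      (∃ i : ℕ, n = -g - 1 - 2 * i) ∨ n = -g + 1} := by
    ext n
    constructor
    · rintro ⟨f, (⟨i, rfl⟩ | ⟨i, rfl⟩) | rfl, rfl⟩
      exacts [Or.inl ⟨i, (hA i).1⟩, Or.inr (Or.inl ⟨i, (hB i).1⟩), Or.inr (Or.inr hw.1)]
    · rintro (⟨i, rfl⟩ | ⟨i, rfl⟩ | rfl)
      exacts [⟨_, Or.inl (Or.inl ⟨i, rfl⟩), (hA i).1⟩,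
        ⟨_, Or.inl (Or.inr ⟨i, rfl⟩), (hB i).1⟩, ⟨w, Or.inr rfl, hw.1⟩]
  refine isUGM_span_of_leadingCoeff_eq_one (K := {n ∈ Finset.Icc 1 ((g : ℤ) - 2) | 2 ∣ g - n})
    (M := {n ∈ Finset.Icc (3 - (g : ℤ)) 0 | 2 ∣ g + 1 - n}) ?_ ?_ ?_ ?_ ?_
  · rintro f ((⟨i, rfl⟩ | ⟨i, rfl⟩) | rfl)
    exacts [(hA i).2, (hB i).2, hw.2]
  · rintro f₁ hf₁ f₂ hf₂ h
    rcases hf₁ with (⟨i, rfl⟩ | ⟨i, rfl⟩) | rfl <;>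
      rcases hf₂ with (⟨j, rfl⟩ | ⟨j, rfl⟩) | rfl <;>
      simp only [(hA _).1, (hB _).1, hw.1] at h <;>
      first | rfl | omega | rw [h]
  · ext n
    simp only [Finset.coe_filter, Finset.mem_Icc, Set.mem_ofPred_eq, himage,
      exists_nat_eq_sub_two_mul_iff]
    omega
  · ext n
    simp only [Finset.coe_filter, Finset.mem_Icc, Set.mem_ofPred_eq, Set.mem_sdiff, Set.mem_Iic,
      himage, exists_nat_eq_sub_two_mul_iff]
    omega
  · refine Finset.card_nbij' (1 - ·) (1 - ·) (fun n hn => ?_) (fun n hn => ?_)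
      (fun n _ => sub_sub_cancel 1 n) (fun n _ => sub_sub_cancel 1 n) <;>
    simp only [Finset.coe_filter, Finset.mem_Icc, Set.mem_ofPred_eq] at hn ⊢ <;>
    omega

theorem statement13_general (g : ℕ) (hg : 2 ≤ g) (α : ℂ)
    (F₀ : PowerSeries ℂ) (hF0 : PowerSeries.constantCoeff F₀ = 1)
    (y₀ : ℂ) :
    IsUGM (Submodule.span ℂ
      ({ f : LaurentSeries ℂ | ∃ i : ℕ, f = zL ^ ((g : ℤ) - 2 - 2 * (i : ℤ)) } ∪
       { f : LaurentSeries ℂ | ∃ i : ℕ,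
          f = zL ^ (-(g : ℤ) - 1 - 2 * (i : ℤ)) * HahnSeries.ofPowerSeries ℤ ℂ F₀ } ∪
       { zL ^ (-(g : ℤ) + 1) * (HahnSeries.ofPowerSeries ℤ ℂ F₀ + y₀ • zL ^ (2 * (g : ℤ) - 1)) *
          (1 - α • zL ^ 2)⁻¹ })) := by
  have hF := isMonicOfOrder_ofPowerSeries hF0
  have hnum : IsMonicOfOrder 0 (ofPowerSeries ℤ ℂ F₀ + y₀ • zL ^ (2 * (g : ℤ) - 1)) :=
    hF.add fun t ht => by rw [coeff_smul_zL_zpow, if_neg (by omega)]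
  have hden : IsMonicOfOrder 0 (1 - α • zL ^ 2) := by
    rw [sub_eq_add_neg, ← single_zero_one]
    exact (isMonicOfOrder_single 0).add fun t ht => by
      rw [coeff_neg, ← zpow_natCast, coeff_smul_zL_zpow, if_neg (by omega), neg_zero]
  refine isUGM_span_generators_of_isMonicOfOrder g (by omega) hF ?_
  simpa using ((isMonicOfOrder_zL_zpow _).mul hnum).mul hden.inv

/-- For `g ≥ 2`, mutually distinct `α, α₁,…,α_{2g-1}`, `F₀ ∈ ℂ[[z]]` with constant
term `1` satisfying `F₀² = ∏_{j=1}^{2g-1}(1-αⱼz²)`, and `y₀` with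
`y₀² = ∏_{j=1}^{2g-1}(α-αⱼ)`, the span of
`{ z^{g-2-2i} } ∪ { z^{-g-1-2i} F₀(z) } ∪ { z^{-g+1}(F₀(z)+y₀z^{2g-1})(1-αz²)⁻¹ }`
is a point of the Sato Grassmannian UGM. -/
theorem statement13 (g : ℕ) (hg : 2 ≤ g) (α : ℂ) (αs : Fin (2 * g - 1) → ℂ)
    (hαs : Function.Injective αs) (hα : ∀ j, α ≠ αs j)
    (F₀ : PowerSeries ℂ) (hF0 : PowerSeries.constantCoeff F₀ = 1)
    (hF : F₀ ^ 2 = ∏ j, (1 - PowerSeries.C (αs j) * PowerSeries.X ^ 2))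
    (y₀ : ℂ) (hy : y₀ ^ 2 = ∏ j, (α - αs j)) :
    IsUGM (Submodule.span ℂ
      ({ f : LaurentSeries ℂ | ∃ i : ℕ, f = zL ^ ((g : ℤ) - 2 - 2 * (i : ℤ)) } ∪
       { f : LaurentSeries ℂ | ∃ i : ℕ,
          f = zL ^ (-(g : ℤ) - 1 - 2 * (i : ℤ)) * HahnSeries.ofPowerSeries ℤ ℂ F₀ } ∪
       { zL ^ (-(g : ℤ) + 1) * (HahnSeries.ofPowerSeries ℤ ℂ F₀ + y₀ • zL ^ (2 * (g : ℤ) - 1)) *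
          (1 - α • zL ^ 2)⁻¹ })) :=
  statement13_general g hg α F₀ hF0 y₀
end
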